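/- arXiv:1508.06422 — 7 statements merged into one kernel-verified Lean document; each statement's English description precedes it below -/
import Mathlib

section
/- Let A be a weak P-tensor of odd order m. Then every Z-eigenvalue of A associated with a nonnegative Z-eigenvector is positive, and every Z-eigenvalue of A associated with a nonpositive Z-eigenvector is negative. -/
open Finset

/-- `(A x^{m-1})_i` for an `m`-order `n`-dimensional tensor, where `k = m - 1`:
entries are indexed by a leading index `i` and `k` trailing indices. -/
def tmap {n k : ℕ} (A : Fin n → (Fin k → Fin n) → ℝ) (x : Fin n → ℝ) : Fin n → ℝ :=
  fun i => ∑ f : Fin k → Fin n, A i f * ∏ j, x (f j)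

def SemiPositive {n k : ℕ} (A : Fin n → (Fin k → Fin n) → ℝ) : Prop :=
  ∀ x : Fin n → ℝ, (∀ i, 0 ≤ x i) → x ≠ 0 → ∃ i, 0 < x i ∧ 0 ≤ tmap A x i

def StrictlySemiPositive {n k : ℕ} (A : Fin n → (Fin k → Fin n) → ℝ) : Prop :=
  ∀ x : Fin n → ℝ, (∀ i, 0 ≤ x i) → x ≠ 0 → ∃ i, 0 < x i ∧ 0 < tmap A x i

def WeakPTensor {n k : ℕ} (A : Fin n → (Fin k → Fin n) → ℝ) : Prop :=
  ∀ x : Fin n → ℝ, x ≠ 0 → ∃ i, (x i) ^ k * tmap A x i > 0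

def ERTensor {n k : ℕ} (A : Fin n → (Fin k → Fin n) → ℝ) : Prop :=
  ¬ ∃ (x : Fin n → ℝ) (t : ℝ), (∀ i, 0 ≤ x i) ∧ x ≠ 0 ∧ 0 ≤ t ∧
    (∀ i, 0 < x i → tmap A x i + t * x i = 0) ∧
    (∀ i, x i = 0 → 0 ≤ tmap A x i)

def RTensor {n k : ℕ} (A : Fin n → (Fin k → Fin n) → ℝ) : Prop :=
  ¬ ∃ (x : Fin n → ℝ) (t : ℝ), (∀ i, 0 ≤ x i) ∧ x ≠ 0 ∧ 0 ≤ t ∧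
    (∀ i, 0 < x i → tmap A x i + t = 0) ∧
    (∀ i, x i = 0 → 0 ≤ tmap A x i + t)

def R0Tensor {n k : ℕ} (A : Fin n → (Fin k → Fin n) → ℝ) : Prop :=
  ¬ ∃ x : Fin n → ℝ, (∀ i, 0 ≤ x i) ∧ x ≠ 0 ∧
    (∀ i, 0 < x i → tmap A x i = 0) ∧
    (∀ i, x i = 0 → 0 ≤ tmap A x i)

theorem stmt3 {n k : ℕ} (A : Fin n → (Fin k → Fin n) → ℝ)
    (hk : Even k)  -- the order m = k + 1 is odd
    (hA : WeakPTensor A) (lam : ℝ) (x : Fin n → ℝ)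
    (hx0 : x ≠ 0) (heig : tmap A x = lam • x) (hnorm : ∑ i, x i ^ 2 = 1) :
    ((∀ i, 0 ≤ x i) → 0 < lam) ∧ ((∀ i, x i ≤ 0) → lam < 0) := by
  constructor <;> intro hpos <;>
  · obtain ⟨i, hi⟩ := hA x hx0
    rw [heig] at hi
    simp only [Pi.smul_apply, smul_eq_mul] at hi
    have hxk : 0 ≤ x i ^ k := hk.pow_nonneg _
    have h1 : 0 < lam * x i := by nlinarith
    nlinarith [hpos i]
end

section
/- Every strictly semi-positive tensor is an ER-tensor. -/
open Finset

theorem stmt4 {n k : ℕ} (A : Fin n → (Fin k → Fin n) → ℝ)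
    (hA : StrictlySemiPositive A) : ERTensor A := by
  rintro ⟨x, t, hx0, hxne, ht, hpos, hzero⟩
  obtain ⟨i, hxi, hti⟩ := hA x hx0 hxne
  have := hpos i hxi
  nlinarith [mul_nonneg ht hxi.le]
end

section
/- Let A be the 3-order 2-dimensional tensor with entries a_{111} = -16, a_{122} = 1, a_{211} = -17, a_{222} = 1 and all other entries zero, so that for x ∈ ℝ²_+, A x² = (-16 x₁² + x₂², -17 x₁² + x₂²). Then A is an R-tensor. -/
open Finset

/-- The tensor of Example 3.1: a_{111} = -16, a_{122} = 1, a_{211} = -17, a_{222} = 1. -/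
def exA : Fin 2 → (Fin 2 → Fin 2) → ℝ := fun i f =>
  if i = 0 ∧ f 0 = 0 ∧ f 1 = 0 then -16
  else if i = 0 ∧ f 0 = 1 ∧ f 1 = 1 then 1
  else if i = 1 ∧ f 0 = 0 ∧ f 1 = 0 then -17
  else if i = 1 ∧ f 0 = 1 ∧ f 1 = 1 then 1
  else 0

lemma tmap0 (x : Fin 2 → ℝ) : tmap exA x 0 = -16 * (x 0)^2 + (x 1)^2 := by
  rw [tmap, show (Finset.univ : Finset (Fin 2 → Fin 2)) = {![0,0],![0,1],![1,0],![1,1]} by decide,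
    Finset.sum_insert (by decide), Finset.sum_insert (by decide), Finset.sum_insert (by decide),
    Finset.sum_singleton]
  simp [exA, Fin.prod_univ_two]
  ring

lemma tmap1 (x : Fin 2 → ℝ) : tmap exA x 1 = -17 * (x 0)^2 + (x 1)^2 := by
  rw [tmap, show (Finset.univ : Finset (Fin 2 → Fin 2)) = {![0,0],![0,1],![1,0],![1,1]} by decide,
    Finset.sum_insert (by decide), Finset.sum_insert (by decide), Finset.sum_insert (by decide),
    Finset.sum_singleton]
  simp [exA, Fin.prod_univ_two]
  ring

theorem stmt7 : RTensor exA := by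
  rintro ⟨x, t, hx, hne, ht, hpos, hzero⟩
  rcases lt_or_eq_of_le (hx 0) with h0' | h0' <;> rcases lt_or_eq_of_le (hx 1) with h1' | h1'
  · have e0 := hpos 0 h0'; have e1 := hpos 1 h1'
    rw [tmap0] at e0; rw [tmap1] at e1; nlinarith
  · have e0 := hpos 0 h0'; have e1 := hzero 1 h1'.symm
    rw [tmap0] at e0; rw [tmap1] at e1; nlinarith
  · have e1 := hpos 1 h1'; rw [tmap1] at e1; nlinarith
  · exact hne (funext fun i => by fin_cases i <;> simp [← h0', ← h1'])
end

section
/- If A is an ER-tensor, then every Z-eigenvalue of A associated with a nonnegative Z-eigenvector is positive. -/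
open Finset

theorem stmt14 {n k : ℕ} (A : Fin n → (Fin k → Fin n) → ℝ)
    (hA : ERTensor A) (lam : ℝ) (x : Fin n → ℝ)
    (hx0 : x ≠ 0) (hxnn : ∀ i, 0 ≤ x i)
    (heig : tmap A x = lam • x) (hnorm : ∑ i, x i ^ 2 = 1) :
    0 < lam := by
  by_contra hl
  push_neg at hl
  exact hA ⟨x, -lam, hxnn, hx0, by linarith, fun i _ => by
    have := congrFun heig i; simp only [Pi.smul_apply, smul_eq_mul] at this; linarith, fun i hi => by
    have := congrFun heig i; simp [this, hi]⟩
end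

section
/- If A is an ER-tensor of even order m, then every Z-eigenvalue of A associated with a nonpositive Z-eigenvector is positive. -/
open Finset

theorem stmt15 {n k : ℕ} (A : Fin n → (Fin k → Fin n) → ℝ)
    (hk : Odd k)  -- the order m = k + 1 is even
    (hA : ERTensor A) (lam : ℝ) (x : Fin n → ℝ)
    (hx0 : x ≠ 0) (hxnp : ∀ i, x i ≤ 0)
    (heig : tmap A x = lam • x) (hnorm : ∑ i, x i ^ 2 = 1) :
    0 < lam := by
  by_contra hlam
  push_neg at hlam
  apply hA
  set y : Fin n → ℝ := fun i => -x i with hy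
  have hyA : tmap A y = fun i => lam * y i := by
    funext i
    have : tmap A y i = - tmap A x i := by
      simp only [tmap, ← Finset.sum_neg_distrib]
      refine Finset.sum_congr rfl fun f _ => ?_
      have : (∏ j, y (f j)) = (-1 : ℝ) ^ k * ∏ j, x (f j) := by
        rw [show (-1 : ℝ) ^ k = ∏ _j : Fin k, (-1 : ℝ) by simp,
          ← Finset.prod_mul_distrib]
        simp [hy]
      rw [this, hk.neg_one_pow]; ring
    rw [this, heig]; simp [hy]
  refine ⟨y, -lam, fun i => by simpa [hy] using hxnp i, ?_, by linarith, ?_, ?_⟩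
  · intro h
    apply hx0
    funext i
    have := congrFun h i
    simp [hy] at this
    simpa using this
  · intro i _
    have := congrFun hyA i
    rw [this]; ring
  · intro i hi
    have := congrFun hyA i
    rw [this, hi]; simp
end

section
/- If A is a semi-positive R₀-tensor, then A is an ER-tensor. -/
open Finset

theorem stmt16 {n k : ℕ} (A : Fin n → (Fin k → Fin n) → ℝ)
    (h1 : SemiPositive A) (h2 : R0Tensor A) : ERTensor A := by
  rintro ⟨x, t, hx, hxne, ht, hpos, hzero⟩
  obtain ⟨i, hxi, hAi⟩ := h1 x hx hxne
  have heq := hpos i hxi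
  have htxi : t * x i ≤ 0 := by linarith
  have ht0 : t = 0 := by
    rcases lt_or_eq_of_le ht with h | h
    · exfalso; nlinarith
    · exact h.symm
  exact h2 ⟨x, hx, hxne, fun j hj => by have := hpos j hj; simpa [ht0] using this,
    hzero⟩
end

section
/- For a semi-positive tensor A, the following are equivalent: (i) A is an R₀-tensor; (ii) A is an ER-tensor; (iii) A is an R-tensor. -/
open Finset

theorem stmt17 {n k : ℕ} (A : Fin n → (Fin k → Fin n) → ℝ)
    (hA : SemiPositive A) :
    (R0Tensor A ↔ ERTensor A) ∧ (ERTensor A ↔ RTensor A) := by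
  have hER : ERTensor A ↔ R0Tensor A := by
    constructor
    · intro hE ⟨x, hx, hxne, h1, h2⟩
      exact hE ⟨x, 0, hx, hxne, le_refl 0, fun i hi => by simp [h1 i hi], h2⟩
    · intro h0 ⟨x, t, hx, hxne, ht, h1, h2⟩
      obtain ⟨i, hxi, hti⟩ := hA x hx hxne
      have hti' := h1 i hxi
      have htx : 0 ≤ t * x i := mul_nonneg ht hxi.le
      have ht0 : t = 0 := by
        have : t * x i = 0 := by linarith
        rcases mul_eq_zero.mp this with h | h
        · exact h
        · exact absurd h hxi.ne'
      refine h0 ⟨x, hx, hxne, fun j hj => ?_, h2⟩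
      have := h1 j hj; rw [ht0] at this; linarith
  have hR : RTensor A ↔ R0Tensor A := by
    constructor
    · intro hE ⟨x, hx, hxne, h1, h2⟩
      exact hE ⟨x, 0, hx, hxne, le_refl 0, fun i hi => by simp [h1 i hi],
        fun i hi => by simpa using h2 i hi⟩
    · intro h0 ⟨x, t, hx, hxne, ht, h1, h2⟩
      obtain ⟨i, hxi, hti⟩ := hA x hx hxne
      have hti' := h1 i hxi
      have ht0 : t = 0 := le_antisymm (by linarith) ht
      refine h0 ⟨x, hx, hxne, fun j hj => ?_, fun j hj => ?_⟩
      · have := h1 j hj; linarith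
      · have := h2 j hj; linarith
  exact ⟨hER.symm, hER.trans hR.symm⟩
end
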